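/- Let l₂(x, y) = (1/π)·arctan(4y(x − 1/2)) + 1/2, let ϑ(t) = (1/2)(sin²(2πt) + sin(2πt)), and for ε > 0 set ζ_ε(t) = l₂(ϑ(t), 1/ε). Then for every ε with 0 < ε < 1/4: ζ_ε(t) ≥ 0 for all t, and ∫_{0}^{1/2} ζ_ε(t) dt ≥ (1 − ε)·(0.34 − 0.16) > 3(0.34 − 0.16)/4. -/
import Mathlib


/-- The function l₂(x, y) = (1/π)·arctan(4y(x − 1/2)) + 1/2. -/
noncomputable def l2 (x y : ℝ) : ℝ := (1 / Real.pi) * Real.arctan (4 * y * (x - 1 / 2)) + 1 / 2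

/-- The periodic function ϑ(t) = (1/2)(sin²(2πt) + sin(2πt)). -/
noncomputable def vartheta (t : ℝ) : ℝ :=
  (1/2) * ((Real.sin (2 * Real.pi * t)) ^ 2 + Real.sin (2 * Real.pi * t))

/-- The clock function ζ_ε(t) = l₂(ϑ(t), 1/ε). -/
noncomputable def zeta (ε t : ℝ) : ℝ := l2 (vartheta t) (1 / ε)

lemma zeta_nonneg (ε t : ℝ) : 0 ≤ zeta ε t := by
  have h1 : -(Real.pi / 2) < Real.arctan (4 * (1/ε) * (vartheta t - 1 / 2)) :=
    Real.neg_pi_div_two_lt_arctan _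
  have hπ : 0 < Real.pi := Real.pi_pos
  unfold zeta l2
  have hmul : (1 / Real.pi) * (-(Real.pi / 2))
      ≤ (1 / Real.pi) * Real.arctan (4 * (1/ε) * (vartheta t - 1 / 2)) :=
    mul_le_mul_of_nonneg_left h1.le (by positivity)
  have h2 : (1 / Real.pi) * (-(Real.pi / 2)) = -(1/2) := by
    field_simp
  linarith

lemma arctan_le_self {u : ℝ} (hu : 0 ≤ u) : Real.arctan u ≤ u := by
  have hnn : 0 ≤ Real.arctan u := by
    rw [← Real.arctan_zero]
    exact Real.arctan_strictMono.monotone hu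
  have h := Real.le_tan hnn (Real.arctan_lt_pi_div_two u)
  rwa [Real.tan_arctan] at h

lemma sin_ge_on (t : ℝ) (ht : t ∈ Set.Icc (1/8 : ℝ) (61/200)) :
    Real.sqrt 2 / 2 ≤ Real.sin (2 * Real.pi * t) := by
  have hπ : 0 < Real.pi := Real.pi_pos
  have hx : Real.pi / 4 ∈ Set.Icc (0:ℝ) Real.pi := by constructor <;> nlinarith
  have hy : 3 * Real.pi / 4 ∈ Set.Icc (0:ℝ) Real.pi := by constructor <;> nlinarith
  have hz : 2 * Real.pi * t ∈ segment ℝ (Real.pi / 4) (3 * Real.pi / 4) := by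
    rw [segment_eq_Icc (by nlinarith)]
    obtain ⟨h1, h2⟩ := ht
    constructor <;> nlinarith
  have := (strictConcaveOn_sin_Icc.concaveOn).ge_on_segment hx hy hz
  have h34 : Real.sin (3 * Real.pi / 4) = Real.sqrt 2 / 2 := by
    have : (3:ℝ) * Real.pi / 4 = Real.pi - Real.pi / 4 := by ring
    rw [this, Real.sin_pi_sub, Real.sin_pi_div_four]
  rw [Real.sin_pi_div_four, h34, min_self] at this
  exact this

lemma zeta_ge_on (ε : ℝ) (hε0 : 0 < ε) (t : ℝ)
    (ht : t ∈ Set.Icc (1/8 : ℝ) (61/200)) : 1 - ε ≤ zeta ε t := by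
  have hπ : 0 < Real.pi := Real.pi_pos
  have hπ3 : Real.pi > 3.14 := by
    have := Real.pi_gt_d6; linarith
  have hsqrt2 : Real.sqrt 2 > 1.41 := by
    nlinarith [Real.sq_sqrt (by norm_num : (2:ℝ) ≥ 0).le, Real.sqrt_nonneg 2]
  have hs := sin_ge_on t ht
  set s := Real.sin (2 * Real.pi * t) with hsdef
  have hs0 : 0 < s := by nlinarith
  have hc : vartheta t - 1/2 ≥ 1 / (4 * Real.pi) := by
    have hsq : s ^ 2 ≥ 1/2 := by
      nlinarith [mul_nonneg (sub_nonneg.2 hs) (by positivity : (0:ℝ) ≤ s + Real.sqrt 2 / 2),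
        Real.sq_sqrt (show (0:ℝ) ≤ 2 by norm_num)]
    have : vartheta t = (1/2) * (s^2 + s) := rfl
    rw [this]
    rw [ge_iff_le, div_le_iff₀ (by positivity)]
    nlinarith
  set A := 4 * (1/ε) * (vartheta t - 1/2) with hA
  have hApos : 0 < A := by
    have : (0:ℝ) < 1 / (4 * Real.pi) := by positivity
    have h4ε : 0 < 4 * (1/ε) := by positivity
    nlinarith
  have hAge : 1 / (Real.pi * ε) ≤ A := by
    have hrw : 1 / (Real.pi * ε) = 4 * (1/ε) * (1 / (4 * Real.pi)) := by
      field_simp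
    rw [hrw, hA]
    exact mul_le_mul_of_nonneg_left hc (by positivity)
  have harctan : Real.pi / 2 - Real.pi * ε ≤ Real.arctan A := by
    have hinv : Real.arctan A⁻¹ = Real.pi / 2 - Real.arctan A :=
      Real.arctan_inv_of_pos hApos
    have h1 : Real.arctan A⁻¹ ≤ A⁻¹ := arctan_le_self (by positivity)
    have h2 : A⁻¹ ≤ Real.pi * ε := by
      rw [inv_le_comm₀ hApos (by positivity)] at *
      · rwa [one_div] at hAge
    linarith [hinv ▸ h1, h2]
  have : zeta ε t = (1 / Real.pi) * Real.arctan A + 1/2 := rfl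
  rw [this]
  have : (1 / Real.pi) * Real.arctan A ≥ (1 / Real.pi) * (Real.pi / 2 - Real.pi * ε) := by
    apply mul_le_mul_of_nonneg_left harctan (by positivity)
  have heq : (1 / Real.pi) * (Real.pi / 2 - Real.pi * ε) = 1/2 - ε := by
    field_simp
  linarith [heq ▸ this]

lemma zeta_continuous (ε : ℝ) : Continuous (zeta ε) := by
  unfold zeta l2 vartheta
  continuity

/-- Conditions (ii′)–(iii′) of Section 5.2: ζ_ε is nonnegative and its integral over
the active half-period [0, 1/2] is bounded below by a constant independent of ε. -/
theorem zeta_clock (ε : ℝ) (hε0 : 0 < ε) (hε1 : ε < 1 / 4) :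
    (∀ t : ℝ, 0 ≤ zeta ε t) ∧
    ((1 - ε) * (0.34 - 0.16) ≤ ∫ t in (0 : ℝ)..(1/2 : ℝ), zeta ε t) ∧
    (3 * (0.34 - 0.16) / 4 < (1 - ε) * (0.34 - 0.16)) := by
  refine ⟨zeta_nonneg ε, ?_, by nlinarith⟩
  have hcont := zeta_continuous ε
  have hint : ∀ a b : ℝ, IntervalIntegrable (zeta ε) MeasureTheory.volume a b :=
    fun a b => hcont.intervalIntegrable a b
  have hsplit1 : (∫ t in (0:ℝ)..(1/8 : ℝ), zeta ε t) + (∫ t in (1/8:ℝ)..(1/2 : ℝ), zeta ε t)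
      = ∫ t in (0:ℝ)..(1/2 : ℝ), zeta ε t :=
    intervalIntegral.integral_add_adjacent_intervals (hint _ _) (hint _ _)
  have hsplit2 : (∫ t in (1/8:ℝ)..(61/200 : ℝ), zeta ε t)
      + (∫ t in (61/200:ℝ)..(1/2 : ℝ), zeta ε t)
      = ∫ t in (1/8:ℝ)..(1/2 : ℝ), zeta ε t :=
    intervalIntegral.integral_add_adjacent_intervals (hint _ _) (hint _ _)
  have h1 : 0 ≤ ∫ t in (0:ℝ)..(1/8 : ℝ), zeta ε t :=
    intervalIntegral.integral_nonneg (by norm_num) (fun t _ => zeta_nonneg ε t)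
  have h3 : 0 ≤ ∫ t in (61/200:ℝ)..(1/2 : ℝ), zeta ε t :=
    intervalIntegral.integral_nonneg (by norm_num) (fun t _ => zeta_nonneg ε t)
  have h2 : (1 - ε) * (0.34 - 0.16) ≤ ∫ t in (1/8:ℝ)..(61/200 : ℝ), zeta ε t := by
    have hconst : (∫ _ in (1/8:ℝ)..(61/200 : ℝ), (1 - ε)) = (61/200 - 1/8) * (1 - ε) := by
      simp
      ring
    have hmono : (∫ _ in (1/8:ℝ)..(61/200 : ℝ), (1 - ε))
        ≤ ∫ t in (1/8:ℝ)..(61/200 : ℝ), zeta ε t := by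
      apply intervalIntegral.integral_mono_on (by norm_num)
        (intervalIntegrable_const) (hint _ _)
      intro t ht
      exact zeta_ge_on ε hε0 t ht
    rw [hconst] at hmono
    have : (61/200 - 1/8 : ℝ) * (1 - ε) = (1 - ε) * (0.34 - 0.16) := by
      rw [mul_comm]
      norm_num
    linarith [this ▸ hmono]
  linarith
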